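/- Let ρ and σ be faithful states on a finite-dimensional complex Hilbert space H. Then for any θ, v ∈ ℝ: (e^{−θ}/(1+e^{v−θ}))·μ_{σ|ρ}([−v, ∞)) ≤ inf{Tr[σ(I−T)] + e^{−θ}·Tr[ρ T] : 0 ≤ T ≤ I}, where μ_{σ|ρ}([−v, ∞)) = Σ Tr[P_μ(σ) ρ^{1/2} P_λ(ρ) ρ^{1/2}], the sum running over eigenvalues λ of ρ and μ of σ with log μ − log λ ≥ −v. -/

import Mathlib

open Matrix MeasureTheory
open scoped ComplexOrder

noncomputable section

namespace QHT

variable {ι : Type*} [Fintype ι] [DecidableEq ι]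

/- Functional calculus for (Hermitian) matrices, via the spectral theorem.
Junk value `0` if the matrix is not Hermitian. -/
noncomputable def matFun (f : ℝ → ℝ) (A : Matrix ι ι ℂ) : Matrix ι ι ℂ :=
  if hA : A.IsHermitian then
    (hA.eigenvectorUnitary : Matrix ι ι ℂ) *
      Matrix.diagonal (fun i => (f (hA.eigenvalues i) : ℂ)) *
      star (hA.eigenvectorUnitary : Matrix ι ι ℂ)
  else 0

/-- Matrix logarithm (of a Hermitian matrix). -/
noncomputable def matLog (A : Matrix ι ι ℂ) : Matrix ι ι ℂ := matFun Real.log A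

/-- Matrix square root (of a Hermitian matrix). -/
noncomputable def matSqrt (A : Matrix ι ι ℂ) : Matrix ι ι ℂ := matFun Real.sqrt A

/-- Quantum relative entropy `D(ρ‖σ) = Tr[ρ (log ρ - log σ)]`. -/
noncomputable def relEntropy (ρ σ : Matrix ι ι ℂ) : ℝ :=
  ((ρ * (matLog ρ - matLog σ)).trace).re

/-- Quantum information variance `V(ρ‖σ) = Tr[ρ (log ρ - log σ)²] - D(ρ‖σ)²`. -/
noncomputable def relVar (ρ σ : Matrix ι ι ℂ) : ℝ :=
  ((ρ * ((matLog ρ - matLog σ) * (matLog ρ - matLog σ))).trace).re - (relEntropy ρ σ) ^ 2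

/-- A state: positive semidefinite with trace one. -/
def IsState (ρ : Matrix ι ι ℂ) : Prop := ρ.PosSemidef ∧ ρ.trace = 1

/-- A faithful state: positive definite with trace one. -/
def IsFaithfulState (ρ : Matrix ι ι ℂ) : Prop := ρ.PosDef ∧ ρ.trace = 1

/-- A test: an operator `T` with `0 ≤ T ≤ I`. -/
def IsTest (T : Matrix ι ι ℂ) : Prop := T.PosSemidef ∧ (1 - T).PosSemidef

/-- Type I error `α(T) = Tr[(I - T) ρ]`. -/
noncomputable def typeI (ρ T : Matrix ι ι ℂ) : ℝ := ((ρ * (1 - T)).trace).re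

/-- Type II error `β(T) = Tr[T σ]`. -/
noncomputable def typeII (σ T : Matrix ι ι ℂ) : ℝ := ((σ * T).trace).re

/-- Optimal type II (Stein) error under the constraint `α(T) ≤ ε`. -/
noncomputable def steinErr (ρ σ : Matrix ι ι ℂ) (ε : ℝ) : ℝ :=
  sInf {b : ℝ | ∃ T : Matrix ι ι ℂ, IsTest T ∧ typeI ρ T ≤ ε ∧ typeII σ T = b}

/-- The ε-hypothesis testing relative entropy. -/
noncomputable def DH (ρ σ : Matrix ι ι ℂ) (ε : ℝ) : ℝ := - Real.log (steinErr ρ σ ε)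

/- `‖log Δ_{σ|ρ} + D(ρ‖σ) id‖`, i.e. the maximum of
`|log μ - log λ + D(ρ‖σ)|` over eigenvalues `λ` of `ρ` and `μ` of `σ`. -/
open Classical in
noncomputable def shiftNorm (ρ σ : Matrix ι ι ℂ) : ℝ :=
  if h : ρ.IsHermitian ∧ σ.IsHermitian then
    ⨆ i : ι, ⨆ j : ι,
      |Real.log (h.2.eigenvalues j) - Real.log (h.1.eigenvalues i) + relEntropy ρ σ|
  else 0

/- Largest eigenvalue of a Hermitian matrix. -/
open Classical in
noncomputable def lamMax (A : Matrix ι ι ℂ) : ℝ :=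
  if hA : A.IsHermitian then ⨆ i : ι, hA.eigenvalues i else 0

/- Smallest eigenvalue of a Hermitian matrix. -/
open Classical in
noncomputable def lamMin (A : Matrix ι ι ℂ) : ℝ :=
  if hA : A.IsHermitian then ⨅ i : ι, hA.eigenvalues i else 0

/- The Loewner order: `A ≤ B` iff `B - A` is positive semidefinite. -/
def loewnerLE {κ : Type*} [Fintype κ] (A B : Matrix κ κ ℂ) : Prop := (B - A).PosSemidef

/-- Splitting off the last tensor factor: `(Fin (n+1) → X) ≃ (Fin n → X) × X`. -/
def splitLast (X : Type*) (n : ℕ) : (Fin (n + 1) → X) ≃ (Fin n → X) × X where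
  toFun f := (fun i => f i.castSucc, f (Fin.last n))
  invFun p := Fin.snoc p.1 p.2
  left_inv f := by
    funext i
    induction i using Fin.lastCases with
    | last => simp
    | cast i => simp
  right_inv p := by
    refine Prod.ext ?_ ?_
    · funext i; simp
    · simp

/-- The tensor product `A ⊗ B` of a state on `H^{⊗(n+1)}` with a state on `H`, viewed as a
state on `H^{⊗(n+2)}`. -/
noncomputable def tensorExt {d n : ℕ}
    (A : Matrix (Fin (n + 1) → Fin d) (Fin (n + 1) → Fin d) ℂ)
    (B : Matrix (Fin d) (Fin d) ℂ) :
    Matrix (Fin (n + 2) → Fin d) (Fin (n + 2) → Fin d) ℂ :=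
  Matrix.reindex (splitLast (Fin d) (n + 1)).symm (splitLast (Fin d) (n + 1)).symm
    (Matrix.kroneckerMap (· * ·) A B)

/-- The canonical identification `H^{⊗1} ≅ H` applied to a matrix. -/
noncomputable def asOne {d : ℕ} (A : Matrix (Fin 1 → Fin d) (Fin 1 → Fin d) ℂ) :
    Matrix (Fin d) (Fin d) ℂ :=
  Matrix.reindex (Equiv.funUnique (Fin 1) (Fin d)) (Equiv.funUnique (Fin 1) (Fin d)) A

/-- The canonical identification `H ≅ H^{⊗1}` applied to a matrix. -/
noncomputable def toOne {d : ℕ} (A : Matrix (Fin d) (Fin d) ℂ) :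
    Matrix (Fin 1 → Fin d) (Fin 1 → Fin d) ℂ :=
  Matrix.reindex (Equiv.funUnique (Fin 1) (Fin d)).symm (Equiv.funUnique (Fin 1) (Fin d)).symm A

/-- Tensor product `A 0 ⊗ A 1 ⊗ ⋯ ⊗ A (n-1)` of a family of matrices. -/
noncomputable def tensorFamily {dm : ℕ → ℕ} (n : ℕ)
    (A : (k : ℕ) → Matrix (Fin (dm k)) (Fin (dm k)) ℂ) :
    Matrix ((k : Fin n) → Fin (dm k)) ((k : Fin n) → Fin (dm k)) ℂ :=
  Matrix.of fun a b => ∏ k : Fin n, A k.1 (a k) (b k)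

/-- Rank-one spectral projection onto the `i`-th eigenvector of a Hermitian matrix. -/
noncomputable def eigProj {A : Matrix ι ι ℂ} (hA : A.IsHermitian) (i : ι) : Matrix ι ι ℂ :=
  Matrix.of fun a b =>
    (hA.eigenvectorUnitary : Matrix ι ι ℂ) a i * star ((hA.eigenvectorUnitary : Matrix ι ι ℂ) b i)

/- The mass `μ_{σ|ρ}(S)` of a set `S ⊆ ℝ` under the spectral measure of
`log Δ_{σ|ρ}` w.r.t. `Ω_ρ = ρ^{1/2}`:
`Σ Tr[P_μ(σ) ρ^{1/2} P_λ(ρ) ρ^{1/2}]` over eigenvalue pairs with `log μ - log λ ∈ S`. -/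
open Classical in
noncomputable def specMassSet (ρ σ : Matrix ι ι ℂ) (S : Set ℝ) : ℝ :=
  if h : ρ.IsHermitian ∧ σ.IsHermitian then
    ∑ i : ι, ∑ j : ι,
      if Real.log (h.2.eigenvalues j) - Real.log (h.1.eigenvalues i) ∈ S then
        ((eigProj h.2 j * matSqrt ρ * eigProj h.1 i * matSqrt ρ).trace).re
      else 0
  else 0

/- The spectral measure `μ_{σ|ρ}` of `log Δ_{σ|ρ}` with respect to `Ω_ρ = ρ^{1/2}`,
as a measure on `ℝ`. -/
open Classical in
noncomputable def specMeasure (ρ σ : Matrix ι ι ℂ) : Measure ℝ :=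
  if h : ρ.IsHermitian ∧ σ.IsHermitian then
    ∑ i : ι, ∑ j : ι,
      (ENNReal.ofReal (((eigProj h.2 j * matSqrt ρ * eigProj h.1 i * matSqrt ρ).trace).re)) •
        Measure.dirac (Real.log (h.2.eigenvalues j) - Real.log (h.1.eigenvalues i))
  else 0

/-- Binary relative entropy. -/
noncomputable def Dbin (p q : ℝ) : ℝ :=
  p * Real.log (p / q) + (1 - p) * Real.log ((1 - p) / (1 - q))

section Channels

variable {ι : Type*} [Fintype ι] [DecidableEq ι]
variable {X : Type*} [Fintype X] [DecidableEq X]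

/-- A POVM with `M` outcomes. -/
def IsPOVM {M : ℕ} (T : Fin M → Matrix ι ι ℂ) : Prop :=
  (∀ k, (T k).PosSemidef) ∧ ∑ k, T k = 1

/-- Average success probability of a code for a classical-quantum channel. -/
noncomputable def avgSuccess {M : ℕ} (W : X → Matrix ι ι ℂ)
    (x : Fin M → X) (T : Fin M → Matrix ι ι ℂ) : ℝ :=
  (1 / M : ℝ) * ∑ k, ((W (x k) * T k).trace).re

/-- Existence of a code of size `M` with average error at most `ε`. -/
def IsCode (W : X → Matrix ι ι ℂ) (M : ℕ) (ε : ℝ) : Prop :=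
  ∃ (x : Fin M → X) (T : Fin M → Matrix ι ι ℂ), IsPOVM T ∧ 1 - ε ≤ avgSuccess W x T

/-- One-shot ε-error capacity `C(W, ε) = log M*(W, ε)`. -/
noncomputable def capacity (W : X → Matrix ι ι ℂ) (ε : ℝ) : ℝ :=
  Real.log ((sSup {M : ℕ | IsCode W M ε} : ℕ) : ℝ)

/-- The average output state `W(p) = Σ_x p(x) W(x)`. -/
noncomputable def mix (W : X → Matrix ι ι ℂ) (p : X → ℝ) : Matrix ι ι ℂ :=
  ∑ x, (p x : ℂ) • W x

/-- The Holevo capacity `χ*(W) = sup_p Σ_x p(x) D(W(x)‖W(p))`. -/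
noncomputable def holevoCap (W : X → Matrix ι ι ℂ) : ℝ :=
  sSup {v : ℝ | ∃ p : X → ℝ, (∀ x, 0 ≤ p x) ∧ ∑ x, p x = 1 ∧
    v = ∑ x, p x * relEntropy (W x) (mix W p)}

/-- A probability mass function achieving the Holevo capacity. -/
def IsMaximizer (W : X → Matrix ι ι ℂ) (p : X → ℝ) : Prop :=
  (∀ x, 0 ≤ p x) ∧ ∑ x, p x = 1 ∧
    ∑ x, p x * relEntropy (W x) (mix W p) = holevoCap W

/-- The lifted state `ρ_p = Σ_x p(x) |x⟩⟨x| ⊗ W(x)`. -/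
noncomputable def liftRho (W : X → Matrix ι ι ℂ) (p : X → ℝ) : Matrix (X × ι) (X × ι) ℂ :=
  Matrix.of fun a b => if a.1 = b.1 then (p a.1 : ℂ) * W a.1 a.2 b.2 else 0

/-- The lifted state `σ_p = Σ_x p(x) |x⟩⟨x| ⊗ W(p)`. -/
noncomputable def liftSigma (W : X → Matrix ι ι ℂ) (p : X → ℝ) : Matrix (X × ι) (X × ι) ℂ :=
  Matrix.of fun a b => if a.1 = b.1 then (p a.1 : ℂ) * (mix W p) a.2 b.2 else 0

/-- The memoryless product channel `W^{⊗n}`. -/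
noncomputable def prodChannel {d : ℕ} (W : X → Matrix (Fin d) (Fin d) ℂ) (n : ℕ) :
    (Fin n → X) → Matrix (Fin n → Fin d) (Fin n → Fin d) ℂ :=
  fun x => Matrix.of fun a b => ∏ k, W (x k) (a k) (b k)

/-- The single-letter channel `W_1 : X → D(H)` underlying a channel family with memory. -/
noncomputable def chan1 {d : ℕ}
    (W : (n : ℕ) → (Fin (n + 1) → X) → Matrix (Fin (n + 1) → Fin d) (Fin (n + 1) → Fin d) ℂ) :
    X → Matrix (Fin d) (Fin d) ℂ :=
  fun x => asOne (W 0 (fun _ => x))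

end Channels

section CPmaps

/-- Amplification `id_F ⊗ Ψ` of a map `Ψ` on matrix algebras, acting blockwise. -/
noncomputable def ampl {F I J : Type*} [Fintype F] [Fintype I] [Fintype J]
    (Ψ : Matrix I I ℂ → Matrix J J ℂ) (M : Matrix (F × I) (F × I) ℂ) :
    Matrix (F × J) (F × J) ℂ :=
  Matrix.of fun p q => Ψ (Matrix.of fun a b => M (p.1, a) (q.1, b)) p.2 q.2

/-- Complete positivity of a map between matrix algebras. -/
def IsCP {I J : Type*} [Fintype I] [Fintype J]
    (Ψ : Matrix I I ℂ → Matrix J J ℂ) : Prop :=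
  ∀ (m : ℕ) (M : Matrix (Fin m × I) (Fin m × I) ℂ), M.PosSemidef → (ampl Ψ M).PosSemidef

/-- Trace preservation of a map between matrix algebras. -/
def IsTP {I J : Type*} [Fintype I] [Fintype J]
    (Ψ : Matrix I I ℂ → Matrix J J ℂ) : Prop :=
  ∀ x, (Ψ x).trace = x.trace

/-- Partial trace over the second tensor factor. -/
noncomputable def ptraceSnd {I K : Type*} [Fintype K] (M : Matrix (I × K) (I × K) ℂ) :
    Matrix I I ℂ :=
  Matrix.of fun a b => ∑ k, M (a, k) (b, k)

/-- Partial trace over the first tensor factor. -/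
noncomputable def ptraceFst {I K : Type*} [Fintype I] (M : Matrix (I × K) (I × K) ℂ) :
    Matrix K K ℂ :=
  Matrix.of fun i j => ∑ a, M (a, i) (a, j)

/-- Reindexing `A ⊗ K ≅ A^{⊗1} ⊗ K`. -/
def tauEquiv0 (dA dK : ℕ) : (Fin dA × Fin dK) ≃ ((Fin 1 → Fin dA) × Fin dK) :=
  Equiv.prodCongr (Equiv.funUnique (Fin 1) (Fin dA)).symm (Equiv.refl (Fin dK))

/-- Reindexing `A^{⊗(n+1)} ⊗ (A ⊗ K) ≅ A^{⊗(n+2)} ⊗ K`. -/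
def tauEquivS (dA dK n : ℕ) :
    ((Fin (n + 1) → Fin dA) × (Fin dA × Fin dK)) ≃ ((Fin (n + 2) → Fin dA) × Fin dK) :=
  (Equiv.prodAssoc (Fin (n + 1) → Fin dA) (Fin dA) (Fin dK)).symm.trans
    (Equiv.prodCongr (splitLast (Fin dA) (n + 1)).symm (Equiv.refl (Fin dK)))

/-- The states `τ_n` generated by a family of CPTP maps `E_n` and an initial state `ρ`:
`τ_1 = E_{1*}(ρ)`, `τ_{n+1} = (id^{⊗n} ⊗ E_{(n+1)*})(τ_n)` (here `fcsTau E ρ n` is `τ_{n+1}`). -/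
noncomputable def fcsTau {dA dK : ℕ}
    (E : ℕ → Matrix (Fin dK) (Fin dK) ℂ →ₗ[ℂ] Matrix (Fin dA × Fin dK) (Fin dA × Fin dK) ℂ)
    (ρ : Matrix (Fin dK) (Fin dK) ℂ) :
    (n : ℕ) → Matrix ((Fin (n + 1) → Fin dA) × Fin dK) ((Fin (n + 1) → Fin dA) × Fin dK) ℂ
  | 0 => Matrix.reindex (tauEquiv0 dA dK) (tauEquiv0 dA dK) (E 0 ρ)
  | n + 1 => Matrix.reindex (tauEquivS dA dK n) (tauEquivS dA dK n)
      (ampl (E (n + 1)) (fcsTau E ρ n))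

end CPmaps


/-! Diagonalise `ρ = ∑ λᵢ uᵢuᵢ*` and `σ = ∑ μⱼ wⱼwⱼ*`; the pair `(i, j)` carries the mass
`λᵢ |⟨uᵢ, wⱼ⟩|²`. Given a test `T`, put `aᵢⱼ = ⟨uᵢ, (1 - T) wⱼ⟩` and `bᵢⱼ = ⟨uᵢ, T wⱼ⟩`, so that
`aᵢⱼ + bᵢⱼ = ⟨uᵢ, wⱼ⟩`. Since `0 ≤ T ≤ 1` gives `T² ≤ T` and `(1 - T)² ≤ 1 - T`,
`Tr[σ(1 - T)] ≥ ∑ μⱼ |aᵢⱼ|²` and `Tr[ρT] ≥ ∑ λᵢ |bᵢⱼ|²`. For pairs with `log μⱼ - log λᵢ ≥ -v`,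
i.e. `λᵢ ≤ e^v μⱼ`, the inequality `pq |a + b|² ≤ (p + q)(p|a|² + q|b|²)` with `p = μⱼ`,
`q = e^{-θ} λᵢ` bounds `e^{-θ}/(1 + e^{v-θ}) · λᵢ |aᵢⱼ + bᵢⱼ|²` by `μⱼ |aᵢⱼ|² + e^{-θ} λᵢ |bᵢⱼ|²`;
summing over all pairs bounds the total error of every test. -/

lemma mul_mul_norm_add_sq_le {E : Type*} [NormedAddCommGroup E] [InnerProductSpace ℝ E]
    (p q : ℝ) (a b : E) :
    p * q * ‖a + b‖ ^ 2 ≤ (p + q) * (p * ‖a‖ ^ 2 + q * ‖b‖ ^ 2) := by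
  have key : (p + q) * (p * ‖a‖ ^ 2 + q * ‖b‖ ^ 2) - p * q * ‖a + b‖ ^ 2 =
      ‖p • a - q • b‖ ^ 2 := by
    rw [norm_sub_sq_real, norm_add_sq_real, norm_smul, norm_smul, real_inner_smul_left,
      real_inner_smul_right, Real.norm_eq_abs, Real.norm_eq_abs, mul_pow, mul_pow, sq_abs, sq_abs]
    ring
  linarith [sq_nonneg ‖p • a - q • b‖]

lemma mul_normSq_add_le_of_le_exp_mul (θ v : ℝ) {l m : ℝ} (hl : 0 ≤ l) (hm : 0 < m)
    (hlm : l ≤ Real.exp v * m) (a b : ℂ) :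
    Real.exp (-θ) / (1 + Real.exp (v - θ)) * (l * Complex.normSq (a + b)) ≤
      m * Complex.normSq a + Real.exp (-θ) * (l * Complex.normSq b) := by
  set κ := Real.exp (-θ) / (1 + Real.exp (v - θ))
  set q := Real.exp (-θ) * l
  have hκ : κ * (1 + Real.exp (v - θ)) = Real.exp (-θ) := div_mul_cancel₀ _ (by positivity)
  -- `κ l` is at most the harmonic-mean weight `m q / (m + q)`
  have hweight : κ * l * (m + q) ≤ m * q :=
    calc κ * l * (m + q) ≤ κ * l * (m + Real.exp (-θ) * (Real.exp v * m)) := by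
          gcongr
          exact mul_le_mul_of_nonneg_left hlm (Real.exp_pos _).le
      _ = κ * (1 + Real.exp (v - θ)) * l * m := by
          rw [sub_eq_add_neg, Real.exp_add]; ring
      _ = m * q := by rw [hκ]; ring
  have hnorm := mul_mul_norm_add_sq_le m q a b
  simp only [← Complex.normSq_eq_norm_sq] at hnorm
  have hpos : 0 < m + q := by positivity
  refine le_of_mul_le_mul_left ?_ hpos
  calc (m + q) * (κ * (l * Complex.normSq (a + b)))
      = κ * l * (m + q) * Complex.normSq (a + b) := by ring
    _ ≤ m * q * Complex.normSq (a + b) :=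
        mul_le_mul_of_nonneg_right hweight (Complex.normSq_nonneg _)
    _ ≤ (m + q) * (m * Complex.normSq a + q * Complex.normSq b) := hnorm
    _ = _ := by ring

lemma le_exp_mul_of_neg_le_log_sub_log {l m v : ℝ} (hl : 0 ≤ l) (hm : 0 < m)
    (h : -v ≤ Real.log m - Real.log l) : l ≤ Real.exp v * m := by
  rcases hl.eq_or_lt with rfl | hl
  · positivity
  calc l = Real.exp (Real.log l) := (Real.exp_log hl).symm
    _ ≤ Real.exp (v + Real.log m) := Real.exp_le_exp.mpr (by linarith)
    _ = Real.exp v * m := by rw [Real.exp_add, Real.exp_log hm]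

lemma mul_ite_normSq_add_le (θ v : ℝ) {l m : ℝ} (hl : 0 ≤ l) (hm : 0 < m) (a b : ℂ) :
    Real.exp (-θ) / (1 + Real.exp (v - θ)) *
        (if Real.log m - Real.log l ∈ Set.Ici (-v) then l * Complex.normSq (a + b) else 0) ≤
      m * Complex.normSq a + Real.exp (-θ) * (l * Complex.normSq b) := by
  split_ifs with h
  · exact mul_normSq_add_le_of_le_exp_mul θ v hl hm
      (le_exp_mul_of_neg_le_log_sub_log hl hm h) a b
  · rw [mul_zero]
    exact add_nonneg (mul_nonneg hm.le (Complex.normSq_nonneg _))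
      (mul_nonneg (Real.exp_pos _).le (mul_nonneg hl (Complex.normSq_nonneg _)))

lemma diagonal_mul_single_mul_diagonal {α : Type*} [Semiring α] (d e : ι → α) (i : ι) :
    diagonal d * single i i 1 * diagonal e = single i i (d i * e i) := by
  ext a b
  simp only [Matrix.mul_diagonal, Matrix.diagonal_mul, Matrix.single_apply]
  split_ifs with h
  · rw [← h.1, ← h.2, mul_one]
  · simp

open Unitary in
lemma matFun_of_isHermitian {A : Matrix ι ι ℂ} (hA : A.IsHermitian) (f : ℝ → ℝ) :
    matFun f A = conjStarAlgAut ℂ _ hA.eigenvectorUnitary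
      (diagonal fun i => (f (hA.eigenvalues i) : ℂ)) :=
  dif_pos hA

open Unitary in
lemma eigProj_eq_conjStarAlgAut {A : Matrix ι ι ℂ} (hA : A.IsHermitian) (i : ι) :
    eigProj hA i = conjStarAlgAut ℂ _ hA.eigenvectorUnitary (single i i 1) := by
  ext a b
  simp [eigProj, Matrix.mul_apply, Matrix.single_apply, Matrix.star_apply, ite_and,
    -IsHermitian.eigenvectorUnitary_apply]

lemma matFun_mul_eigProj_mul_matFun {A : Matrix ι ι ℂ} (hA : A.IsHermitian) (f g : ℝ → ℝ)
    (i : ι) :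
    matFun f A * eigProj hA i * matFun g A =
      ((f (hA.eigenvalues i) * g (hA.eigenvalues i) : ℝ) : ℂ) • eigProj hA i := by
  rw [matFun_of_isHermitian, matFun_of_isHermitian, eigProj_eq_conjStarAlgAut, ← map_mul,
    ← map_mul, diagonal_mul_single_mul_diagonal, ← map_smul, smul_single, smul_eq_mul, mul_one,
    Complex.ofReal_mul]

lemma matSqrt_mul_eigProj_mul_matSqrt {A : Matrix ι ι ℂ} (hA : A.PosSemidef) (i : ι) :
    matSqrt A * eigProj hA.1 i * matSqrt A = (hA.1.eigenvalues i : ℂ) • eigProj hA.1 i := by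
  rw [matSqrt, matFun_mul_eigProj_mul_matFun, Real.mul_self_sqrt (hA.eigenvalues_nonneg i)]

open Unitary in
lemma trace_eigProj_mul_eigProj {A B : Matrix ι ι ℂ} (hA : A.IsHermitian) (hB : B.IsHermitian)
    (i j : ι) :
    (eigProj hB j * eigProj hA i).trace = Complex.normSq
      ((star (hA.eigenvectorUnitary : Matrix ι ι ℂ) * hB.eigenvectorUnitary) i j) := by
  set U := hA.eigenvectorUnitary
  have htrace : ∀ X, (conjStarAlgAut ℂ _ (star U) X).trace = X.trace := fun X => by
    rw [conjStarAlgAut_apply, Matrix.trace_mul_cycle, ← Unitary.coe_star, star_star,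
      Unitary.coe_mul_star_self, Matrix.one_mul]
  rw [← htrace, map_mul, eigProj_eq_conjStarAlgAut, eigProj_eq_conjStarAlgAut,
    ← conjStarAlgAut_mul_apply, ← conjStarAlgAut_mul_apply, star_mul_self, map_one,
    StarAlgEquiv.one_apply, conjStarAlgAut_apply, Matrix.trace_mul_comm, ← Matrix.mul_assoc,
    ← Matrix.mul_assoc, single_mul_mul_single, trace_single_mul, Matrix.star_apply,
    Complex.normSq_eq_conj_mul_self]
  simp [mul_comm]

open Classical in
lemma specMassSet_eq_sum {ρ σ : Matrix ι ι ℂ} (hρ : ρ.PosSemidef) (hσ : σ.IsHermitian)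
    (S : Set ℝ) :
    specMassSet ρ σ S = ∑ i, ∑ j,
      if Real.log (hσ.eigenvalues j) - Real.log (hρ.1.eigenvalues i) ∈ S then
        hρ.1.eigenvalues i * Complex.normSq
          ((star (hρ.1.eigenvectorUnitary : Matrix ι ι ℂ) * hσ.eigenvectorUnitary) i j)
      else 0 := by
  rw [specMassSet, dif_pos ⟨hρ.1, hσ⟩]
  refine Finset.sum_congr rfl fun i _ => Finset.sum_congr rfl fun j _ => ?_
  rw [Matrix.mul_assoc, Matrix.mul_assoc, ← Matrix.mul_assoc (matSqrt ρ),
    matSqrt_mul_eigProj_mul_matSqrt hρ, Matrix.mul_smul, trace_smul, trace_eigProj_mul_eigProj,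
    smul_eq_mul, ← Complex.ofReal_mul, Complex.ofReal_re]

lemma trace_mul_eq_sum_eigenvalues_mul {A : Matrix ι ι ℂ} (hA : A.IsHermitian)
    (X : Matrix ι ι ℂ) :
    (A * X).trace = ∑ j, (hA.eigenvalues j : ℂ) *
      (star (hA.eigenvectorUnitary : Matrix ι ι ℂ) * X * hA.eigenvectorUnitary) j j := by
  conv_lhs => rw [hA.spectral_theorem, Unitary.conjStarAlgAut_apply]
  rw [Matrix.mul_assoc, Matrix.mul_assoc, Matrix.trace_mul_comm, Matrix.mul_assoc]
  simp [Matrix.trace, Matrix.diagonal_mul]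

lemma sum_normSq_apply_eq_re_mul_conjTranspose_apply {m n : Type*} [Fintype n]
    (N : Matrix m n ℂ) (j : m) :
    ∑ i, Complex.normSq (N j i) = ((N * Nᴴ) j j).re := by
  simp [Matrix.mul_apply, Complex.normSq_apply, Complex.mul_re]

omit [Fintype ι] in
lemma IsTest.one_sub {T : Matrix ι ι ℂ} (hT : IsTest T) : IsTest (1 - T) :=
  ⟨hT.2, by rw [sub_sub_cancel]; exact hT.1⟩

open scoped MatrixOrder in
lemma IsTest.posSemidef_sub_mul_self {T : Matrix ι ι ℂ} (hT : IsTest T) :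
    (T - T * T).PosSemidef := by
  obtain ⟨S, hS, rfl⟩ : ∃ S : Matrix ι ι ℂ, S.PosSemidef ∧ S * S = T :=
    ⟨CFC.sqrt T, (CFC.sqrt_nonneg T).posSemidef, CFC.sqrt_mul_sqrt_self T hT.1.nonneg⟩
  have h := hT.2.mul_mul_conjTranspose_same S
  rw [hS.1] at h
  convert h using 1
  noncomm_ring

lemma sum_eigenvalues_mul_sum_normSq_le_re_trace_mul {A T : Matrix ι ι ℂ} (hA : A.PosSemidef)
    (hT : IsTest T) (V : unitaryGroup ι ℂ) :
    ∑ j, hA.1.eigenvalues j * ∑ i, Complex.normSq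
      ((star (hA.1.eigenvectorUnitary : Matrix ι ι ℂ) * T * V) j i) ≤ ((A * T).trace).re := by
  set U := (hA.1.eigenvectorUnitary : Matrix ι ι ℂ)
  rw [trace_mul_eq_sum_eigenvalues_mul hA.1, Complex.re_sum]
  gcongr with j
  rw [Complex.re_ofReal_mul]
  gcongr
  · exact hA.eigenvalues_nonneg j
  have hrow : (star U * T * (V : Matrix ι ι ℂ)) * (star U * T * (V : Matrix ι ι ℂ))ᴴ =
      star U * (T * T) * U := by
    rw [Matrix.conjTranspose_mul, Matrix.conjTranspose_mul, hT.1.1,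
      ← Matrix.star_eq_conjTranspose, ← Matrix.star_eq_conjTranspose, star_star,
      Matrix.mul_assoc _ (V : Matrix ι ι ℂ), ← Matrix.mul_assoc (V : Matrix ι ι ℂ),
      Matrix.mem_unitaryGroup_iff.mp V.2, Matrix.one_mul]
    simp only [Matrix.mul_assoc]
  have hdiag : 0 ≤ (star U * (T - T * T) * U) j j :=
    (hT.posSemidef_sub_mul_self.conjTranspose_mul_mul_same U).diag_nonneg
  rw [Matrix.mul_sub, Matrix.sub_mul, Matrix.sub_apply] at hdiag
  rw [sum_normSq_apply_eq_re_mul_conjTranspose_apply, hrow]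
  simpa using (Complex.nonneg_iff.mp hdiag).1

lemma mul_specMassSet_Ici_le_of_isTest {ρ σ T : Matrix ι ι ℂ} (hρ : ρ.PosSemidef)
    (hσ : σ.PosDef) (hT : IsTest T) (θ v : ℝ) :
    Real.exp (-θ) / (1 + Real.exp (v - θ)) * specMassSet ρ σ (Set.Ici (-v)) ≤
      ((σ * (1 - T)).trace).re + Real.exp (-θ) * ((ρ * T).trace).re := by
  set U := hρ.1.eigenvectorUnitary
  set W := hσ.1.eigenvectorUnitary
  have hσT := sum_eigenvalues_mul_sum_normSq_le_re_trace_mul hσ.posSemidef hT.one_sub U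
  have hρT := sum_eigenvalues_mul_sum_normSq_le_re_trace_mul hρ hT W
  rw [specMassSet_eq_sum hρ hσ.1]
  set p := hρ.1.eigenvalues
  set q := hσ.1.eigenvalues
  set A := star (W : Matrix ι ι ℂ) * (1 - T) * U
  set B := star (U : Matrix ι ι ℂ) * T * W
  have hsplit : ∀ i j, (star (U : Matrix ι ι ℂ) * W) i j = star (A j i) + B i j := by
    intro i j
    rw [← Matrix.star_apply, ← Matrix.add_apply, star_mul, star_mul, star_star,
      Matrix.star_eq_conjTranspose (1 - T), hT.one_sub.1.1, ← Matrix.mul_assoc,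
      ← Matrix.add_mul, Matrix.mul_sub, Matrix.mul_one, sub_add_cancel]
  calc _ ≤ ∑ i, ∑ j, (q j * Complex.normSq (A j i) +
        Real.exp (-θ) * (p i * Complex.normSq (B i j))) := by
        simp_rw [Finset.mul_sum]
        refine Finset.sum_le_sum fun i _ => Finset.sum_le_sum fun j _ => ?_
        rw [hsplit, ← Complex.normSq_conj (A j i)]
        exact mul_ite_normSq_add_le θ v (hρ.eigenvalues_nonneg i) (hσ.eigenvalues_pos j) _ _
    _ = ∑ j, q j * ∑ i, Complex.normSq (A j i) +
        Real.exp (-θ) * ∑ i, p i * ∑ j, Complex.normSq (B i j) := by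
        simp only [Finset.sum_add_distrib, Finset.mul_sum]
        rw [Finset.sum_comm]
    _ ≤ _ := add_le_add hσT (mul_le_mul_of_nonneg_left hρT (Real.exp_pos _).le)

/-- **Lemma 4 (Jakšić–Ogata–Pillet–Seiringer).** For faithful states `ρ`, `σ` and any
`θ, v ∈ ℝ`, `(e^{-θ}/(1+e^{v-θ})) μ_{σ|ρ}([-v, ∞)) ≤ e*_sym(σ, e^{-θ}ρ)`, the minimal total
error in symmetric hypothesis testing of `σ` against `e^{-θ}ρ`. -/
theorem spectral_lower_bound_symmetric_error
    {ι : Type*} [Fintype ι] [DecidableEq ι] (ρ σ : Matrix ι ι ℂ)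
    (hρ : IsFaithfulState ρ) (hσ : IsFaithfulState σ) (θ v : ℝ) :
    Real.exp (-θ) / (1 + Real.exp (v - θ)) * specMassSet ρ σ (Set.Ici (-v)) ≤
      sInf {e : ℝ | ∃ T : Matrix ι ι ℂ, IsTest T ∧
        e = ((σ * (1 - T)).trace).re + Real.exp (-θ) * ((ρ * T).trace).re} := by
  refine le_csInf ⟨_, 0, ⟨PosSemidef.zero, by simpa using PosSemidef.one⟩, rfl⟩ ?_
  rintro _ ⟨T, hT, rfl⟩
  exact mul_specMassSet_Ici_le_of_isTest hρ.1.posSemidef hσ.1 hT θ v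
end QHT
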